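/- arXiv:2506.15116 — 4 statements merged into one kernel-verified Lean document; each statement's English description precedes it below -/
import Mathlib

section
/- (Maslov's transformation produces the reversal mapping.) For every integer n ≥ 2, let σ_k denote the product of the adjacent transpositions (j, j+1) for j ∈ N_k (these pairwise commute, so the product is well defined). Then the composition σ_{2n−4} ∘ σ_{2n−5} ∘ ⋯ ∘ σ_1 ∘ σ_0, applied to the identity mapping, yields the reversal permutation of {0, …, n−1}; that is, τ_{2n−3} := σ_{2n−4} ∘ ⋯ ∘ σ_0 satisfies τ_{2n−3}(i) = n−1−i for every 0 ≤ i ≤ n−1. -/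
/-! σ_k swaps the pairs (j, j+1) with j ≡ t (mod 2), j ≤ t, where t = min k (2n-4-k); this is
`pairSwap t`. By induction on m, the partial product τ_m = σ_{m-1} ∘ ⋯ ∘ σ_0 has an explicit
closed form (`maslovTau`), and for m = 2n-3 its first clause covers every i < n. -/

/-- For an integer `n ≥ 2` and `0 ≤ k ≤ 2n-4`, the set `N_k`:
for `0 ≤ k ≤ n-2`, `N_k = {j : 0 ≤ j ≤ k, j ≡ k (mod 2)}`;
for `n-1 ≤ k ≤ 2n-4`, `N_k = N_{2n-4-k}`. -/
def Nset (n k : ℕ) : Finset ℕ :=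
  if k ≤ n - 2 then
    (Finset.range (k + 1)).filter (fun j => j % 2 = k % 2)
  else
    (Finset.range ((2 * n - 4 - k) + 1)).filter (fun j => j % 2 = (2 * n - 4 - k) % 2)

/-- `σ_k`: the product of the adjacent transpositions `(j, j+1)` for `j ∈ N_k`.
Distinct elements of `N_k` differ by at least 2, so these transpositions pairwise
commute and the product does not depend on the order; here we take the elements of
`N_k` in increasing order. -/
def sigmaPerm (n k : ℕ) : Equiv.Perm ℕ :=
  (((Nset n k).sort (· ≤ ·)).map (fun j => Equiv.swap j (j + 1))).prod

lemma prod_map_swap_add_two_mul_apply (c r v : ℕ) :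
    (((List.range c).map fun i => Equiv.swap (r + 2 * i) (r + 2 * i + 1)).prod : Equiv.Perm ℕ) v =
      if v < r ∨ r + 2 * c ≤ v then v else if (v - r) % 2 = 0 then v + 1 else v - 1 := by
  induction c generalizing v with
  | zero => simp
  | succ c ih =>
    rw [List.range_succ, List.map_append, List.prod_append, List.map_singleton,
      List.prod_singleton, Equiv.Perm.mul_apply]
    by_cases hl : v = r + 2 * c
    · rw [hl, Equiv.swap_apply_left, ih]
      split_ifs <;> omega
    by_cases hr : v = r + 2 * c + 1
    · rw [hr, Equiv.swap_apply_right, ih]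
      split_ifs <;> omega
    rw [Equiv.swap_apply_of_ne_of_ne hl hr, ih]
    split_ifs <;> omega

lemma sort_filter_mod_two_eq_map_range (t : ℕ) :
    ((Finset.range (t + 1)).filter (fun j => j % 2 = t % 2)).sort (· ≤ ·) =
      (List.range (t / 2 + 1)).map (fun i => t % 2 + 2 * i) := by
  have hinj : Function.Injective fun i => t % 2 + 2 * i := fun a b h => by simp only at h; omega
  have hset : (Finset.range (t + 1)).filter (fun j => j % 2 = t % 2) =
      ((List.range (t / 2 + 1)).map (fun i => t % 2 + 2 * i)).toFinset := by
    ext j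
    simp only [Finset.mem_filter, Finset.mem_range, List.mem_toFinset, List.mem_map,
      List.mem_range]
    constructor
    · rintro ⟨hj, hpar⟩
      exact ⟨(j - t % 2) / 2, by omega, by omega⟩
    · rintro ⟨i, hi, rfl⟩
      omega
  rw [hset, List.toFinset_sort _ (List.nodup_range.map hinj)]
  exact List.pairwise_lt_range.map _ fun a b hab => by omega

lemma Nset_eq_filter (n k : ℕ) :
    Nset n k = (Finset.range (min k (2 * n - 4 - k) + 1)).filter
      (fun j => j % 2 = min k (2 * n - 4 - k) % 2) := by
  unfold Nset
  split_ifs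
  · rw [min_eq_left (by omega)]
  · rw [min_eq_right (by omega)]

def pairSwap (t v : ℕ) : ℕ :=
  if v < t % 2 ∨ t + 1 < v then v else if v % 2 = t % 2 then v + 1 else v - 1

lemma sigmaPerm_apply (n k v : ℕ) : sigmaPerm n k v = pairSwap (min k (2 * n - 4 - k)) v := by
  set t := min k (2 * n - 4 - k)
  rw [sigmaPerm, Nset_eq_filter, sort_filter_mod_two_eq_map_range, List.map_map]
  have h := prod_map_swap_add_two_mul_apply (t / 2 + 1) (t % 2) v
  rw [show t % 2 + 2 * (t / 2 + 1) = t + 2 by omega] at h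
  rw [Function.comp_def, h, pairSwap]
  split_ifs <;> omega

/-- On i ≤ min m (n-1), τ_m(0), τ_m(1), … is the zigzag m, m-2, …, (1 or 0), (0 or 1), …, m-1,
except that the first m-(n-1) entries have already reached their final values n-1-i;
beyond that τ_m is the identity. -/
def maslovTau (n m i : ℕ) : ℕ :=
  if i < m - (n - 1) then n - 1 - i
  else if 2 * i ≤ m then m - 2 * i
  else if i ≤ m ∧ i ≤ n - 1 then 2 * i - m - 1
  else i

lemma pairSwap_maslovTau {n m : ℕ} (hm : m + 1 ≤ 2 * n - 3) (i : ℕ) :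
    pairSwap (min m (2 * n - 4 - m)) (maslovTau n m i) = maslovTau n (m + 1) i := by
  unfold pairSwap maslovTau
  split_ifs <;> omega

lemma prod_sigmaPerm_apply {n m : ℕ} (hm : m ≤ 2 * n - 3) (i : ℕ) :
    (((List.range m).reverse.map (sigmaPerm n)).prod : Equiv.Perm ℕ) i = maslovTau n m i := by
  induction m with
  | zero =>
    simp only [List.range_zero, List.reverse_nil, List.map_nil, List.prod_nil,
      Equiv.Perm.coe_one, id_eq, maslovTau]
    split_ifs <;> omega
  | succ m ih =>
    rw [List.range_succ, List.reverse_append, List.reverse_singleton, List.singleton_append,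
      List.map_cons, List.prod_cons, Equiv.Perm.mul_apply, ih (by omega), sigmaPerm_apply,
      pairSwap_maslovTau hm]

theorem stmt4_general (n : ℕ) :
    ∀ i < n,
      (((List.range (2 * n - 3)).reverse.map (sigmaPerm n)).prod : Equiv.Perm ℕ) i
        = n - 1 - i := by
  intro i hi
  rw [prod_sigmaPerm_apply le_rfl, maslovTau]
  split_ifs <;> omega

/-- Maslov's transformation produces the reversal mapping: the composition
`σ_{2n-4} ∘ σ_{2n-5} ∘ ⋯ ∘ σ_1 ∘ σ_0`, applied to the identity mapping,
yields the reversal permutation of `{0, …, n-1}`: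
`τ_{2n-3}(i) = n - 1 - i` for all `0 ≤ i ≤ n-1`. -/
theorem stmt4 (n : ℕ) (hn : 2 ≤ n) :
    ∀ i < n,
      (((List.range (2 * n - 3)).reverse.map (sigmaPerm n)).prod : Equiv.Perm ℕ) i
        = n - 1 - i :=
  stmt4_general n
end

section
/- (Every pair of logical qubits interacts exactly once in Maslov's transformation.) For an integer n ≥ 2, define permutations τ_k of {0, …, n−1} by τ_0 = identity and τ_{k+1} = σ_k ∘ τ_k, where σ_k is the product of the commuting adjacent transpositions (j, j+1) for j ∈ N_k. For each 0 ≤ k ≤ 2n−4 and each j ∈ N_k, let P(k, j) denote the unordered pair {τ_k^{-1}(j), τ_k^{-1}(j+1)}. Then the assignment (k, j) ↦ P(k, j) is injective, and its range is exactly the set of all unordered pairs of distinct elements of {0, …, n−1}; that is, each of the n(n−1)/2 unordered pairs occurs as P(k, j) for exactly one pair (k, j) with j ∈ N_k. -/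
/-- `τ_0 = id` and `τ_{k+1} = σ_k ∘ τ_k`. -/
def tauPerm (n : ℕ) : ℕ → Equiv.Perm ℕ
  | 0 => 1
  | k + 1 => sigmaPerm n k * tauPerm n k

/-- `P(k, j)`: the unordered pair `{τ_k⁻¹(j), τ_k⁻¹(j+1)}`. -/
def Ppair (n k j : ℕ) : Sym2 ℕ :=
  s((tauPerm n k)⁻¹ j, (tauPerm n k)⁻¹ (j + 1))

/-! After `k` layers, wire `j < n` with `j ≤ k < 2n - 2 - j` carries qubit `(k - j)/2` or
`(k + j + 1)/2` according to the parity of `k + j`; wires beyond the front `j > k` are untouched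
and wires behind the back `k + j ≥ 2n - 2` already carry their final, reversed qubit `n - 1 - j`.
This closed form is checked layer by layer. Hence the layer-`k` gate on wires `j, j + 1` acts on
`{(k - j)/2, (k + j)/2 + 1}`, and `(k, j) ↦ (a, b)` is a bijection onto the pairs `a < b < n`,
with inverse `k = a + b - 1`, `j = b - a - 1`. -/

namespace List

variable {L : List ℕ} {x : ℕ}

theorem prod_map_swap_succ_apply_of_forall_ne (hx : ∀ j ∈ L, x ≠ j ∧ x ≠ j + 1) :
    (L.map fun j => Equiv.swap j (j + 1)).prod x = x := by
  induction L with
  | nil => rfl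
  | cons a t ih =>
    obtain ⟨hxa, hxa'⟩ := hx a mem_cons_self
    rw [map_cons, prod_cons, Equiv.Perm.mul_apply, ih fun j hj => hx j (mem_cons_of_mem a hj),
      Equiv.swap_apply_of_ne_of_ne hxa hxa']

theorem prod_map_swap_succ_apply_of_mem (hL : L.Pairwise (· + 2 ≤ ·)) (hx : x ∈ L) :
    (L.map fun j => Equiv.swap j (j + 1)).prod x = x + 1 := by
  induction L with
  | nil => simp at hx
  | cons a t ih =>
    rw [pairwise_cons] at hL
    rw [map_cons, prod_cons, Equiv.Perm.mul_apply]
    rcases mem_cons.1 hx with rfl | hxt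
    · rw [prod_map_swap_succ_apply_of_forall_ne fun j hj => by have := hL.1 j hj; omega,
        Equiv.swap_apply_left]
    · have := hL.1 x hxt
      rw [ih hL.2 hxt, Equiv.swap_apply_of_ne_of_ne (by omega) (by omega)]

theorem prod_map_swap_succ_apply_succ_of_mem (hL : L.Pairwise (· + 2 ≤ ·)) (hx : x ∈ L) :
    (L.map fun j => Equiv.swap j (j + 1)).prod (x + 1) = x := by
  induction L with
  | nil => simp at hx
  | cons a t ih =>
    rw [pairwise_cons] at hL
    rw [map_cons, prod_cons, Equiv.Perm.mul_apply]
    rcases mem_cons.1 hx with rfl | hxt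
    · rw [prod_map_swap_succ_apply_of_forall_ne fun j hj => by have := hL.1 j hj; omega,
        Equiv.swap_apply_right]
    · have := hL.1 x hxt
      rw [ih hL.2 hxt, Equiv.swap_apply_of_ne_of_ne (by omega) (by omega)]

end List

section Maslov

variable {n k j : ℕ}

theorem mem_Nset_iff (hk : k ≤ 2 * n - 4) :
    j ∈ Nset n k ↔ j ≤ k ∧ k + j ≤ 2 * n - 4 ∧ j % 2 = k % 2 := by
  unfold Nset
  split_ifs <;> simp only [Finset.mem_filter, Finset.mem_range] <;> omega

theorem mod_two_eq_of_mem_Nset {i : ℕ} (hi : i ∈ Nset n k) (hj : j ∈ Nset n k) :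
    i % 2 = j % 2 := by
  unfold Nset at hi hj
  split_ifs at hi hj <;> simp only [Finset.mem_filter] at hi hj <;> omega

theorem pairwise_sort_Nset (n k : ℕ) :
    ((Nset n k).sort (· ≤ ·)).Pairwise (· + 2 ≤ ·) := by
  refine (Finset.sortedLT_sort _).pairwise.imp_of_mem fun hi hj hij => ?_
  have := mod_two_eq_of_mem_Nset ((Finset.mem_sort _).1 hi) ((Finset.mem_sort _).1 hj)
  omega

theorem sigmaPerm_inv_apply (hk : k ≤ 2 * n - 4) (j : ℕ) :
    (sigmaPerm n k)⁻¹ j =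
      if j ≤ k ∧ k + j ≤ 2 * n - 4 ∧ j % 2 = k % 2 then j + 1
      else if 0 < j ∧ j - 1 ≤ k ∧ k + (j - 1) ≤ 2 * n - 4 ∧ (j - 1) % 2 = k % 2 then j - 1
      else j := by
  rw [Equiv.Perm.inv_eq_iff_eq]
  have hL := pairwise_sort_Nset n k
  simp only [← mem_Nset_iff hk, ← Finset.mem_sort (· ≤ ·)]
  split_ifs with h₁ h₂
  · exact (List.prod_map_swap_succ_apply_succ_of_mem hL h₁).symm
  · have := List.prod_map_swap_succ_apply_of_mem hL h₂.2
    rwa [Nat.sub_add_cancel h₂.1, eq_comm] at this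
  · refine (List.prod_map_swap_succ_apply_of_forall_ne fun i hi => ⟨?_, ?_⟩).symm <;> rintro rfl
    · exact h₁ hi
    · exact h₂ ⟨i.succ_pos, hi⟩

def qubitOnWire (n k j : ℕ) : ℕ :=
  if n ≤ j ∨ k < j then j
  else if 2 * n - 2 ≤ k + j then n - 1 - j
  else if (k + j) % 2 = 0 then (k - j) / 2
  else (k + j + 1) / 2

theorem tauPerm_inv_apply (hk : k ≤ 2 * n - 3) (j : ℕ) :
    (tauPerm n k)⁻¹ j = qubitOnWire n k j := by
  induction k generalizing j with
  | zero =>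
    simp only [tauPerm, inv_one, Equiv.Perm.one_apply, qubitOnWire]
    split_ifs <;> omega
  | succ k ih =>
    rw [tauPerm, mul_inv_rev, Equiv.Perm.mul_apply, sigmaPerm_inv_apply (by omega)]
    split_ifs <;> rw [ih (by omega)] <;> unfold qubitOnWire <;> split_ifs <;> omega

theorem Ppair_eq (hk : k ≤ 2 * n - 4) (hj : j ∈ Nset n k) :
    Ppair n k j = s((k - j) / 2, (k + j) / 2 + 1) := by
  have := (mem_Nset_iff hk).1 hj
  rw [Ppair, tauPerm_inv_apply (by omega), tauPerm_inv_apply (by omega)]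
  congr 1 <;> unfold qubitOnWire <;> split_ifs <;> omega

theorem Ppair_injOn :
    Set.InjOn (fun p : ℕ × ℕ => Ppair n p.1 p.2) {p | p.1 ≤ 2 * n - 4 ∧ p.2 ∈ Nset n p.1} := by
  rintro ⟨k, j⟩ ⟨hk, hj⟩ ⟨k', j'⟩ ⟨hk', hj'⟩ h
  have := (mem_Nset_iff hk).1 hj
  have := (mem_Nset_iff hk').1 hj'
  simp only [Ppair_eq hk hj, Ppair_eq hk' hj', Sym2.eq_iff] at h
  rw [Prod.mk.injEq]
  omega

theorem mk_mem_image_Ppair {a b : ℕ} (hab : a < b) (hb : b < n) :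
    s(a, b) ∈ (fun p : ℕ × ℕ => Ppair n p.1 p.2) '' {p | p.1 ≤ 2 * n - 4 ∧ p.2 ∈ Nset n p.1} := by
  have hk : a + b - 1 ≤ 2 * n - 4 := by omega
  have hj : b - a - 1 ∈ Nset n (a + b - 1) := (mem_Nset_iff hk).2 (by omega)
  refine ⟨(a + b - 1, b - a - 1), ⟨hk, hj⟩, ?_⟩
  dsimp only
  rw [Ppair_eq hk hj]
  congr 1 <;> omega

theorem image_Ppair (hn : 2 ≤ n) :
    (fun p : ℕ × ℕ => Ppair n p.1 p.2) '' {p | p.1 ≤ 2 * n - 4 ∧ p.2 ∈ Nset n p.1} =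
      {z : Sym2 ℕ | ¬ z.IsDiag ∧ ∀ a ∈ z, a < n} := by
  ext z
  constructor
  · rintro ⟨⟨k, j⟩, ⟨hk, hj⟩, rfl⟩
    have := (mem_Nset_iff hk).1 hj
    simp only [Ppair_eq hk hj, Set.mem_ofPred_eq, Sym2.mk_isDiag_iff, Sym2.mem_iff,
      forall_eq_or_imp, forall_eq]
    omega
  · induction z using Sym2.ind with
    | _ a b =>
      intro h
      simp only [Set.mem_ofPred_eq, Sym2.mk_isDiag_iff, Sym2.mem_iff, forall_eq_or_imp,
        forall_eq] at h
      obtain ⟨hab, ha, hb⟩ := h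
      rcases Nat.lt_or_gt_of_ne hab with hab | hba
      · exact mk_mem_image_Ppair hab hb
      · rw [Sym2.eq_swap]
        exact mk_mem_image_Ppair hba ha

end Maslov

/-- Every pair of logical qubits interacts exactly once in Maslov's transformation:
the assignment `(k, j) ↦ P(k, j)`, for `0 ≤ k ≤ 2n-4` and `j ∈ N_k`, is injective
and its range is exactly the set of all unordered pairs of distinct elements of
`{0, …, n-1}`. -/
theorem stmt5 (n : ℕ) (hn : 2 ≤ n) :
    Set.InjOn (fun p : ℕ × ℕ => Ppair n p.1 p.2)
      {p : ℕ × ℕ | p.1 ≤ 2 * n - 4 ∧ p.2 ∈ Nset n p.1} ∧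
    (fun p : ℕ × ℕ => Ppair n p.1 p.2) ''
        {p : ℕ × ℕ | p.1 ≤ 2 * n - 4 ∧ p.2 ∈ Nset n p.1}
      = {z : Sym2 ℕ | ¬ z.IsDiag ∧ ∀ a ∈ z, a < n} :=
  ⟨Ppair_injOn, image_Ppair hn⟩
end

section
/- (Existence of long zigzag paths in square grids.) For every positive integer w, there exists an injective map f from {0, 1, …, 4w² − 2w + 1} into the grid {0, …, 2w−1} × {0, …, 2w−1} such that for every i, f(i+1) and f(i) differ by exactly 1 in exactly one coordinate, and consecutive steps alternate between changing the x-coordinate and changing the y-coordinate. In other words, a zigzag folding of 4w² − 2w + 2 points into a (2w × 2w)-grid exists, wasting at most 2w − 2 grid points. -/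
/-!
Peel off the border strip of width 2 of the `2n × 2n` grid. A zigzag runs up its two left
columns, along the two top rows, down the two right columns and back along the two bottom
rows; it visits `16n - 20` of the `16n - 16` cells of the strip and ends at `(2, 1)`, just
below the corner `(2, 2)` of the inner `(2n - 4)`-grid. Appending a translated zigzag of the
inner grid gives `N(n) = 16n - 20 + N(n - 2)` points, and `N(n) = 4n² - 2n + 2` follows from
the grids of side 2 and 4. Making step `k` horizontal exactly for even `k` turns the
alternation into a parity condition, which survives the gluing because `16n - 20` is even.
-/

def HorizAdj (a b : ℕ × ℕ) : Prop := a.2 = b.2 ∧ (a.1 + 1 = b.1 ∨ b.1 + 1 = a.1)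

def VertAdj (a b : ℕ × ℕ) : Prop := a.1 = b.1 ∧ (a.2 + 1 = b.2 ∨ b.2 + 1 = a.2)

def ZigzagStep (k : ℕ) (a b : ℕ × ℕ) : Prop :=
  if k % 2 = 0 then HorizAdj a b else VertAdj a b

instance (k : ℕ) : DecidableRel (ZigzagStep k) := fun _ _ => by
  unfold ZigzagStep HorizAdj VertAdj
  infer_instance

theorem ZigzagStep.abs_sub_add_abs_sub {k : ℕ} {a b : ℕ × ℕ} (h : ZigzagStep k a b) :
    |(b.1 : ℤ) - a.1| + |(b.2 : ℤ) - a.2| = 1 := by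
  unfold ZigzagStep HorizAdj VertAdj at h
  split_ifs at h <;> rcases h with ⟨h, h' | h'⟩ <;> simp [h, ← h']

theorem ZigzagStep.alternate {k : ℕ} {a b c : ℕ × ℕ}
    (hab : ZigzagStep k a b) (hbc : ZigzagStep (k + 1) b c) :
    (b.1 ≠ a.1 → c.1 = b.1) ∧ (b.2 ≠ a.2 → c.2 = b.2) := by
  unfold ZigzagStep HorizAdj VertAdj at hab hbc
  split_ifs at hab hbc <;> omega

def IsZigzag (N : ℕ) (p : ℕ → ℕ × ℕ) : Prop :=
  ∀ k, k + 1 < N → ZigzagStep k (p k) (p (k + 1))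

def glue (m : ℕ) (p q : ℕ → ℕ × ℕ) (i : ℕ) : ℕ × ℕ :=
  if i < m then p i else q (i - m)

section Glue
variable {m n : ℕ} {p q : ℕ → ℕ × ℕ}

theorem isZigzag_glue (hp : IsZigzag m p) (hq : IsZigzag n q) (hm : m % 2 = 0)
    (hpq : VertAdj (p (m - 1)) (q 0)) : IsZigzag (m + n) (glue m p q) := by
  intro k hk
  unfold glue
  rcases lt_trichotomy (k + 1) m with hkm | hkm | hkm
  · rw [if_pos (by omega), if_pos hkm]
    exact hp k hkm
  · rw [if_pos (by omega), if_neg (by omega), show k + 1 - m = 0 by omega,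
      show k = m - 1 by omega, ZigzagStep, if_neg (by omega)]
    exact hpq
  · rw [if_neg (by omega), if_neg (by omega), show k + 1 - m = k - m + 1 by omega]
    have := hq (k - m) (by omega)
    rwa [ZigzagStep, show (k - m) % 2 = k % 2 by omega] at this

theorem injOn_glue (hp : Set.InjOn p (Set.Iio m)) (hq : Set.InjOn q (Set.Iio n))
    (hpq : ∀ i < m, ∀ j < n, p i ≠ q j) : Set.InjOn (glue m p q) (Set.Iio (m + n)) := by
  intro i hi j hj h
  simp only [Set.mem_Iio] at hi hj
  unfold glue at h
  split_ifs at h with hi' hj' hj'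
  · exact hp hi' hj' h
  · exact absurd h (hpq i hi' (j - m) (by omega))
  · exact absurd h.symm (hpq j hj' (i - m) (by omega))
  · have := hq (show i - m < n by omega) (show j - m < n by omega) h
    omega

end Glue

theorem IsZigzag.add_const {N : ℕ} {p : ℕ → ℕ × ℕ} (hp : IsZigzag N p) (c : ℕ × ℕ) :
    IsZigzag N (fun i => p i + c) := by
  intro k hk
  have := hp k hk
  unfold ZigzagStep HorizAdj VertAdj at this ⊢
  simp only [Prod.fst_add, Prod.snd_add]
  split_ifs at this ⊢ <;> omega

structure IsGridZigzag (s N : ℕ) (p : ℕ → ℕ × ℕ) : Prop where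
  map_zero : p 0 = (0, 0)
  injOn : Set.InjOn p (Set.Iio N)
  lt_side : ∀ i < N, (p i).1 < s ∧ (p i).2 < s
  isZigzag : IsZigzag N p

/-- The four branches are the left, top, right and bottom parts of the border strip. -/
def frame (n i : ℕ) : ℕ × ℕ :=
  if i < 4 * n - 1 then ((i + 1) / 2 % 2, i / 2)
  else if i < 8 * n - 6 then
    (2 + (i - (4 * n - 1)) / 2, 2 * n - 1 - (i - (4 * n - 1) + 1) / 2 % 2)
  else if i < 12 * n - 12 then
    (2 * n - 1 - (i - (8 * n - 6) + 1) / 2 % 2, 2 * n - 3 - (i - (8 * n - 6)) / 2)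
  else (2 * n - 2 - (i - (12 * n - 12) + 1) / 2, (i - (12 * n - 12)) / 2 % 2)

section Frame
variable {n : ℕ}

theorem frame_zero : frame n 0 = (0, 0) := by
  unfold frame
  split_ifs <;> simp only [Prod.mk.injEq] <;> omega

theorem frame_last (hn : 2 ≤ n) : frame n (16 * n - 20 - 1) = (2, 1) := by
  unfold frame
  split_ifs <;> simp only [Prod.mk.injEq] <;> omega

theorem frame_mem_border (hn : 2 ≤ n) (i : ℕ) :
    (frame n i).1 < 2 * n ∧ (frame n i).2 < 2 * n ∧
      ((frame n i).1 < 2 ∨ 2 * n - 2 ≤ (frame n i).1 ∨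
        (frame n i).2 < 2 ∨ 2 * n - 2 ≤ (frame n i).2) := by
  unfold frame
  split_ifs <;> omega

theorem frame_isZigzag : IsZigzag (16 * n - 20) (frame n) := by
  intro k hk
  unfold ZigzagStep HorizAdj VertAdj frame
  split_ifs <;> omega

theorem frame_injOn : Set.InjOn (frame n) (Set.Iio (16 * n - 20)) := by
  intro i hi j hj h
  simp only [Set.mem_Iio] at hi hj
  unfold frame at h
  split_ifs at h <;> simp only [Prod.mk.injEq] at h <;> omega

end Frame

theorem IsGridZigzag.frame_glue {n N : ℕ} {p : ℕ → ℕ × ℕ} (hp : IsGridZigzag (2 * n) N p) :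
    IsGridZigzag (2 * (n + 2)) (16 * (n + 2) - 20 + N)
      (glue (16 * (n + 2) - 20) (frame (n + 2)) (fun i => p i + (2, 2))) := by
  have hn : 2 ≤ n + 2 := by omega
  have hshift : ∀ i < N, 2 ≤ (p i + (2, 2)).1 ∧ (p i + (2, 2)).1 < 2 * n + 2 ∧
      2 ≤ (p i + (2, 2)).2 ∧ (p i + (2, 2)).2 < 2 * n + 2 := by
    intro i hi
    have := hp.lt_side i hi
    simp only [Prod.fst_add, Prod.snd_add]
    omega
  refine ⟨?_, ?_, ?_, ?_⟩
  · simp only [glue, if_pos (show 0 < 16 * (n + 2) - 20 by omega), frame_zero]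
  · refine injOn_glue frame_injOn ?_ ?_
    · intro i hi j hj h
      exact hp.injOn hi hj (add_right_cancel h)
    · intro i _ j hj h
      have := frame_mem_border hn i
      have := hshift j hj
      rw [h] at *
      omega
  · intro i hi
    unfold glue
    split_ifs with h
    · exact (frame_mem_border hn i).imp_right And.left
    · have := hshift (i - (16 * (n + 2) - 20)) (by omega)
      dsimp only
      omega
  · refine isZigzag_glue frame_isZigzag (hp.isZigzag.add_const _) (by omega) ?_
    rw [frame_last hn, hp.map_zero]
    exact ⟨rfl, Or.inl rfl⟩

theorem exists_isGridZigzag_two : ∃ p, IsGridZigzag 2 4 p := by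
  refine ⟨fun i => [(0, 0), (1, 0), (1, 1), (0, 1)].getD i (0, 0), rfl, ?_, by decide, ?_⟩
  · simp only [Set.InjOn, Set.mem_Iio]
    decide
  · intro k hk
    replace hk : k < 3 := by omega
    interval_cases k <;> decide

theorem exists_isGridZigzag_four : ∃ p, IsGridZigzag 4 14 p := by
  refine ⟨fun i => [(0, 0), (1, 0), (1, 1), (0, 1), (0, 2), (1, 2), (1, 3), (2, 3), (2, 2),
    (3, 2), (3, 1), (2, 1), (2, 0), (3, 0)].getD i (0, 0), rfl, ?_, by decide, ?_⟩
  · simp only [Set.InjOn, Set.mem_Iio]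
    decide
  · intro k hk
    replace hk : k < 13 := by omega
    interval_cases k <;> decide

theorem exists_isGridZigzag (n : ℕ) (hn : 0 < n) :
    ∃ p, IsGridZigzag (2 * n) (4 * n ^ 2 - 2 * n + 2) p := by
  induction n using Nat.strong_induction_on with
  | _ n ih =>
    match n, hn with
    | 1, _ => exact exists_isGridZigzag_two
    | 2, _ => exact exists_isGridZigzag_four
    | n + 3, _ =>
      obtain ⟨p, hp⟩ := ih (n + 1) (by omega) (by omega)
      have hN : 4 * (n + 3) ^ 2 - 2 * (n + 3) + 2 =
          16 * (n + 3) - 20 + (4 * (n + 1) ^ 2 - 2 * (n + 1) + 2) := by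
        rw [show 16 * (n + 3) - 20 = 16 * n + 28 by omega]
        zify [show 2 * (n + 3) ≤ 4 * (n + 3) ^ 2 by nlinarith,
          show 2 * (n + 1) ≤ 4 * (n + 1) ^ 2 by nlinarith]
        ring
      exact hN ▸ ⟨_, hp.frame_glue⟩

/-- Existence of long zigzag paths in square grids: for every positive integer
`w`, there is a zigzag folding of `4w² - 2w + 2` points into the
`(2w × 2w)`-grid, i.e. an injective map `f` on `{0, …, 4w² - 2w + 1}` into
`{0, …, 2w-1} × {0, …, 2w-1}` such that consecutive images are at L1 distance 1
(each step changes exactly one coordinate by exactly 1) and consecutive steps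
alternate between changing the x-coordinate and changing the y-coordinate. -/
theorem stmt13 (w : ℕ) (hw : 0 < w) :
    ∃ f : ℕ → ℤ × ℤ,
      Set.InjOn f (Set.Iio (4 * w ^ 2 - 2 * w + 2)) ∧
      (∀ i < 4 * w ^ 2 - 2 * w + 2,
        0 ≤ (f i).1 ∧ (f i).1 < 2 * w ∧ 0 ≤ (f i).2 ∧ (f i).2 < 2 * w) ∧
      (∀ i, i + 1 < 4 * w ^ 2 - 2 * w + 2 →
        |(f (i + 1)).1 - (f i).1| + |(f (i + 1)).2 - (f i).2| = 1) ∧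
      (∀ i, 0 < i → i + 1 < 4 * w ^ 2 - 2 * w + 2 →
        (((f i).1 ≠ (f (i - 1)).1 → (f (i + 1)).1 = (f i).1) ∧
         ((f i).2 ≠ (f (i - 1)).2 → (f (i + 1)).2 = (f i).2))) := by
  obtain ⟨p, hp⟩ := exists_isGridZigzag w hw
  refine ⟨fun i => ((p i).1, (p i).2), ?_, ?_, ?_, ?_⟩
  · exact (Prod.map_injective.2 ⟨Nat.cast_injective, Nat.cast_injective⟩).comp_injOn hp.injOn
  · intro i hi
    have := hp.lt_side i hi
    dsimp only
    omega
  · exact fun i hi => (hp.isZigzag i hi).abs_sub_add_abs_sub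
  · intro i hi₀ hi
    obtain ⟨k, rfl⟩ : ∃ k, i = k + 1 := ⟨i - 1, by omega⟩
    simpa using (hp.isZigzag k (by omega)).alternate (hp.isZigzag (k + 1) hi)
end

section
/- (Space-efficient zigzag folding of any number of atoms.) For every positive integer n, setting m = ⌈√n / 2⌉, there exists a zigzag folding of n points into the (2m+2) × (2m+2) grid, i.e., an injective map f from {0, …, n−1} into {0, …, 2m+1} × {0, …, 2m+1} such that consecutive images are at L1 distance 1 and consecutive steps alternate between horizontal and vertical. -/
/-!
Walk a staircase `(0,0), (1,0), (1,1), (2,1), (2,0), (3,0), …` through two rows at a time: a strip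
of `4m` points fills the columns `0, …, 2m` of two rows, with horizontal steps exactly at even
times. Stacking `m` such strips in boustrophedon order, the last point of a strip sits directly
below the first point of the next, so the step between strips is vertical and falls at an odd
time. This folds `4m²` points into `{0, …, 2m} × {0, …, 2m - 1}`, and `n ≤ 4m²` for
`m = ⌈√n / 2⌉`.
-/

def HorizontalUnitStep (p q : ℤ × ℤ) : Prop := q.2 = p.2 ∧ |q.1 - p.1| = 1

def VerticalUnitStep (p q : ℤ × ℤ) : Prop := q.1 = p.1 ∧ |q.2 - p.2| = 1

lemma HorizontalUnitStep.l1_dist_eq_one {p q : ℤ × ℤ} (h : HorizontalUnitStep p q) :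
    |q.1 - p.1| + |q.2 - p.2| = 1 := by
  simp [h.1, h.2]

lemma VerticalUnitStep.l1_dist_eq_one {p q : ℤ × ℤ} (h : VerticalUnitStep p q) :
    |q.1 - p.1| + |q.2 - p.2| = 1 := by
  simp [h.1, h.2]

def IsHorizontalFirstZigzag (f : ℕ → ℤ × ℤ) : Prop :=
  ∀ i, (Even i → HorizontalUnitStep (f i) (f (i + 1))) ∧
    (Odd i → VerticalUnitStep (f i) (f (i + 1)))

namespace IsHorizontalFirstZigzag

variable {f : ℕ → ℤ × ℤ}

lemma l1_dist_eq_one (hf : IsHorizontalFirstZigzag f) (i : ℕ) :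
    |(f (i + 1)).1 - (f i).1| + |(f (i + 1)).2 - (f i).2| = 1 := by
  rcases Nat.even_or_odd i with hi | hi
  · exact ((hf i).1 hi).l1_dist_eq_one
  · exact ((hf i).2 hi).l1_dist_eq_one

lemma alternates (hf : IsHorizontalFirstZigzag f) {i : ℕ} (hi : 0 < i) :
    ((f i).1 ≠ (f (i - 1)).1 → (f (i + 1)).1 = (f i).1) ∧
      ((f i).2 ≠ (f (i - 1)).2 → (f (i + 1)).2 = (f i).2) := by
  obtain ⟨k, rfl⟩ := Nat.exists_eq_add_of_lt hi
  simp only [zero_add, Nat.add_sub_cancel]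
  constructor
  · intro hx
    have hk : Even k := by
      by_contra hk
      exact hx ((hf k).2 (Nat.not_even_iff_odd.mp hk)).1
    exact ((hf (k + 1)).2 hk.add_one).1
  · intro hy
    have hk : Odd k := by
      by_contra hk
      exact hy ((hf k).1 (Nat.not_odd_iff_even.mp hk)).1
    exact ((hf (k + 1)).1 hk.add_one).1

end IsHorizontalFirstZigzag

def stair (r : ℕ) : ℕ × ℕ := ((r + 1) / 2, r % 4 / 2)

/-- Position `r` of strip `q`: the strip lies in rows `2q, 2q + 1` and is walked left to right
for even `q`, right to left (mirrored in column `m`) for odd `q`. -/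
def boustrophedon (m q r : ℕ) : ℤ × ℤ :=
  (if Even q then ((stair r).1 : ℤ) else 2 * m - (stair r).1, 2 * q + (stair r).2)

def snake (m i : ℕ) : ℤ × ℤ := boustrophedon m (i / (4 * m)) (i % (4 * m))

lemma exists_eq_mul_add_of_pos {d : ℕ} (hd : 0 < d) (i : ℕ) : ∃ q r, r < d ∧ i = d * q + r :=
  ⟨i / d, i % d, Nat.mod_lt _ hd, (Nat.div_add_mod i d).symm⟩

lemma snake_mul_add {m q r : ℕ} (hr : r < 4 * m) :
    snake m (4 * m * q + r) = boustrophedon m q r := by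
  rw [snake, Nat.mul_add_div (by omega), Nat.div_eq_of_lt hr, Nat.mul_add_mod,
    Nat.mod_eq_of_lt hr, add_zero]

lemma snake_injective {m : ℕ} (hm : 0 < m) : Function.Injective (snake m) := by
  intro i j h
  obtain ⟨q, r, hr, rfl⟩ := exists_eq_mul_add_of_pos (by omega : 0 < 4 * m) i
  obtain ⟨q', r', hr', rfl⟩ := exists_eq_mul_add_of_pos (by omega : 0 < 4 * m) j
  rw [snake_mul_add hr, snake_mul_add hr'] at h
  simp only [boustrophedon, stair, Prod.mk.injEq] at h
  obtain ⟨hx, hy⟩ := h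
  obtain rfl : q = q' := by omega
  obtain rfl : r = r' := by split_ifs at hx <;> omega
  rfl

lemma snake_mem_box {m k i : ℕ} (hi : i < 4 * m * k) :
    0 ≤ (snake m i).1 ∧ (snake m i).1 ≤ 2 * m ∧ 0 ≤ (snake m i).2 ∧ (snake m i).2 < 2 * k := by
  have hm : 0 < 4 * m := Nat.pos_of_ne_zero (by rintro h; simp [h] at hi)
  obtain ⟨q, r, hr, rfl⟩ := exists_eq_mul_add_of_pos hm i
  have hq : q < k := by nlinarith
  rw [snake_mul_add hr]
  simp only [boustrophedon, stair]
  split_ifs <;> omega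

lemma snake_isHorizontalFirstZigzag {m : ℕ} (hm : 0 < m) :
    IsHorizontalFirstZigzag (snake m) := by
  intro i
  obtain ⟨q, r, hr, rfl⟩ := exists_eq_mul_add_of_pos (by omega : 0 < 4 * m) i
  have hsucc : snake m (4 * m * q + r + 1) =
      if r + 1 < 4 * m then boustrophedon m q (r + 1) else boustrophedon m (q + 1) 0 := by
    split_ifs with h
    · exact snake_mul_add h
    · rw [show 4 * m * q + r + 1 = 4 * m * (q + 1) + 0 by rw [mul_add]; omega]
      exact snake_mul_add (by omega)
  have hparity : (4 * m * q + r) % 2 = r % 2 := by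
    rw [show 4 * m * q = 2 * (2 * m * q) by ring, Nat.mul_add_mod]
  simp only [HorizontalUnitStep, VerticalUnitStep, hsucc, snake_mul_add hr, Nat.even_iff,
    Nat.odd_iff, hparity, abs_eq zero_le_one]
  split_ifs <;> simp only [boustrophedon, stair, Nat.even_iff] <;> split_ifs <;> omega

lemma le_four_mul_ceil_sqrt_div_two_sq (n : ℕ) :
    n ≤ 4 * ⌈Real.sqrt n / 2⌉₊ * ⌈Real.sqrt n / 2⌉₊ := by
  have h : Real.sqrt n ≤ 2 * ⌈Real.sqrt n / 2⌉₊ := by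
    linarith [Nat.le_ceil (Real.sqrt n / 2)]
  rw [Real.sqrt_le_iff] at h
  exact_mod_cast (by linarith [h.2] : (n : ℝ) ≤ 4 * ⌈Real.sqrt n / 2⌉₊ * ⌈Real.sqrt n / 2⌉₊)

/-- Space-efficient zigzag folding of any number of atoms: for every positive
integer `n`, with `m = ⌈√n / 2⌉`, there exists a zigzag folding of `n` points
into the `(2m+2) × (2m+2)` grid, i.e. an injective map `f` on `{0, …, n-1}` into
`{0, …, 2m+1} × {0, …, 2m+1}` such that consecutive images are at L1 distance 1
and consecutive steps alternate between horizontal and vertical. -/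
theorem stmt14 (n : ℕ) (hn : 0 < n) (m : ℕ) (hm : m = ⌈Real.sqrt n / 2⌉₊) :
    ∃ f : ℕ → ℤ × ℤ,
      Set.InjOn f (Set.Iio n) ∧
      (∀ i < n,
        0 ≤ (f i).1 ∧ (f i).1 ≤ 2 * m + 1 ∧ 0 ≤ (f i).2 ∧ (f i).2 ≤ 2 * m + 1) ∧
      (∀ i, i + 1 < n →
        |(f (i + 1)).1 - (f i).1| + |(f (i + 1)).2 - (f i).2| = 1) ∧
      (∀ i, 0 < i → i + 1 < n →
        (((f i).1 ≠ (f (i - 1)).1 → (f (i + 1)).1 = (f i).1) ∧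
         ((f i).2 ≠ (f (i - 1)).2 → (f (i + 1)).2 = (f i).2))) := by
  have hsize : n ≤ 4 * m * m := hm ▸ le_four_mul_ceil_sqrt_div_two_sq n
  have hm0 : 0 < m := Nat.pos_of_ne_zero (by rintro rfl; omega)
  have hzigzag := snake_isHorizontalFirstZigzag hm0
  refine ⟨snake m, (snake_injective hm0).injOn, fun i hi => ?_,
    fun i _ => hzigzag.l1_dist_eq_one i, fun i hi _ => hzigzag.alternates hi⟩
  have := snake_mem_box (k := m) (hi.trans_le hsize)
  omega
end
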